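/- arXiv:1111.5598 — 2 statements merged into one kernel-verified Lean document; each statement's English description precedes it below -/
import Mathlib

section
/- Equality case: If G is a simple graph on n vertices with φ(G) = n/(n − \bar{\bar d}(G)), then n ≡ 0 (mod φ(G)) and G is regular of degree n(φ(G)−1)/φ(G). -/
open Finset

/-- A δ-set in a graph: every vertex in the set has degree at most `n - |S|`. -/
def IsDeltaSet {V : Type*} [Fintype V] (G : SimpleGraph V) [DecidableRel G.Adj]
    (S : Finset V) : Prop :=
  ∀ v ∈ S, G.degree v ≤ Fintype.card V - S.card

/-- The generalized chromatic number: the least `r` such that the vertex set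
partitions into `r` δ-sets. -/
noncomputable def genChrom {V : Type*} [Fintype V] [DecidableEq V]
    (G : SimpleGraph V) [DecidableRel G.Adj] : ℕ :=
  sInf {r | ∃ f : V → Fin r, ∀ i, IsDeltaSet G (Finset.univ.filter fun v => f v = i)}

/-- Quadratic mean of the degree sequence. -/
noncomputable def qmDeg {V : Type*} [Fintype V] (G : SimpleGraph V) [DecidableRel G.Adj] : ℝ :=
  Real.sqrt ((∑ v, (G.degree v : ℝ) ^ 2) / Fintype.card V)

/-- `k`-th elementary symmetric polynomial of `x : Fin r → ℝ`. -/
def esym {r : ℕ} (k : ℕ) (x : Fin r → ℝ) : ℝ :=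
  ∑ t ∈ Finset.univ.powersetCard k, ∏ i ∈ t, x i


/-!
Partition `V` into `r = φ(G)` δ-sets of sizes `a₁, …, a_r` and put `m = n / r`. A vertex of the
`i`-th part has degree at most `n - aᵢ`, so `∑ᵥ d(v)² ≤ ∑ᵢ aᵢ (n - aᵢ)²`. On `[0, n]` the cubic
`x (n - x)²` lies below its tangent line at `m`, the gap being `(x - m)² (2n - 2m - x)`; summing
the tangent line over the parts gives `∑ᵢ aᵢ (n - aᵢ)² ≤ n (n - m)²`, and the hypothesis says that
`n (n - m)² = n q̄² = ∑ᵥ d(v)²`. Hence all the gaps vanish, so each `aᵢ - m` is `0` or `2n - 3m`;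
as these sum to `0`, every part has size `m`, and then every degree equals `n - m`.
-/

section TangentLine

variable {ι : Type*} [Fintype ι] {n : ℝ} {a : ι → ℝ}

def tangentGap (n m x : ℝ) : ℝ := (x - m) ^ 2 * (2 * n - 2 * m - x)

lemma mul_sub_sq_add_tangentGap (n m x : ℝ) :
    x * (n - x) ^ 2 + tangentGap n m x =
      (n ^ 2 - 4 * m * n + 3 * m ^ 2) * x + 2 * m ^ 2 * (n - m) := by
  rw [tangentGap]; ring

lemma sum_mul_sub_sq_add_sum_tangentGap [Nonempty ι] (hsum : ∑ i, a i = n) :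
    ∑ i, a i * (n - a i) ^ 2 + ∑ i, tangentGap n (n / Fintype.card ι) (a i) =
      n * (n - n / Fintype.card ι) ^ 2 := by
  set m := n / Fintype.card ι
  have hrm : (Fintype.card ι : ℝ) * m = n := mul_div_cancel₀ n (by positivity)
  rw [← sum_add_distrib, Fintype.sum_congr _ _ fun i => mul_sub_sq_add_tangentGap n m (a i),
    sum_add_distrib, ← mul_sum, hsum, sum_const, card_univ, nsmul_eq_mul]
  linear_combination (2 * m * (n - m)) * hrm

lemma tangentGap_nonneg (ha : ∀ i, 0 ≤ a i) (hsum : ∑ i, a i = n) (i : ι) :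
    0 ≤ tangentGap n (n / Fintype.card ι) (a i) := by
  have hle : a i ≤ n := hsum ▸ single_le_sum (fun j _ => ha j) (mem_univ i)
  rcases Nat.lt_or_ge (Fintype.card ι) 2 with hcard | hcard
  · have hcard : Fintype.card ι = 1 := by have := Fintype.card_pos_iff.2 ⟨i⟩; omega
    have hai : a i = n := by
      rw [← hsum, Fintype.sum_eq_single i fun j hj =>
        absurd (Fintype.card_le_one_iff.1 hcard.le j i) hj]
    simp [tangentGap, hcard, hai]
  · have hn : 0 ≤ n := hsum ▸ sum_nonneg fun j _ => ha j
    have : n / Fintype.card ι ≤ n / 2 :=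
      div_le_div_of_nonneg_left hn (by norm_num) (by exact_mod_cast hcard)
    exact mul_nonneg (sq_nonneg _) (by linarith)

lemma sum_mul_sub_sq_le [Nonempty ι] (ha : ∀ i, 0 ≤ a i) (hsum : ∑ i, a i = n) :
    ∑ i, a i * (n - a i) ^ 2 ≤ n * (n - n / Fintype.card ι) ^ 2 := by
  have := sum_nonneg fun i (_ : i ∈ univ) => tangentGap_nonneg ha hsum i
  linarith [sum_mul_sub_sq_add_sum_tangentGap hsum]

lemma eq_zero_of_sum_eq_zero_of_eq_zero_or_eq {x : ι → ℝ} {d : ℝ} (hx : ∀ i, x i = 0 ∨ x i = d)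
    (hsum : ∑ i, x i = 0) (i : ι) : x i = 0 := by
  rcases le_total 0 d with hd | hd
  · exact (sum_eq_zero_iff_of_nonneg fun j _ => (hx j).elim ge_of_eq (· ▸ hd)).1 hsum i (mem_univ i)
  · exact (sum_eq_zero_iff_of_nonpos fun j _ => (hx j).elim le_of_eq (· ▸ hd)).1 hsum i (mem_univ i)

lemma eq_div_card_of_le_sum_mul_sub_sq [Nonempty ι] (ha : ∀ i, 0 ≤ a i) (hsum : ∑ i, a i = n)
    (hge : n * (n - n / Fintype.card ι) ^ 2 ≤ ∑ i, a i * (n - a i) ^ 2) (i : ι) :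
    a i = n / Fintype.card ι := by
  set m := n / Fintype.card ι
  have hgap : ∀ j, tangentGap n m (a j) = 0 := by
    have hgap_sum := sum_mul_sub_sq_add_sum_tangentGap hsum
    have hgap_nonneg := fun j (_ : j ∈ univ) => tangentGap_nonneg ha hsum j
    exact fun j => (sum_eq_zero_iff_of_nonneg hgap_nonneg).1
      (le_antisymm (by linarith) (sum_nonneg hgap_nonneg)) j (mem_univ j)
  have hcases : ∀ j, a j - m = 0 ∨ a j - m = 2 * n - 3 * m := fun j => by
    rcases mul_eq_zero.1 (hgap j) with h | h
    · exact .inl (pow_eq_zero_iff two_ne_zero |>.1 h)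
    · exact .inr (by linarith)
  have hcentered : ∑ j, (a j - m) = 0 := by
    rw [sum_sub_distrib, hsum, sum_const, card_univ, nsmul_eq_mul,
      mul_div_cancel₀ n (by positivity), sub_self]
  linarith [eq_zero_of_sum_eq_zero_of_eq_zero_or_eq hcases hcentered i]

end TangentLine

lemma sum_comp_eq_sum_card_fiber_mul {α ι : Type*} [Fintype α] [Fintype ι] [DecidableEq ι]
    (f : α → ι) (g : ι → ℝ) : ∑ x, g (f x) = ∑ i, #(univ.filter fun x => f x = i) * g i := by
  rw [← sum_fiberwise' univ f g]
  simp only [sum_const, nsmul_eq_mul]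

section DeltaSet

variable {V : Type*} [Fintype V] (G : SimpleGraph V) [DecidableRel G.Adj]

lemma isDeltaSet_of_card_le_one {S : Finset V} (hS : #S ≤ 1) : IsDeltaSet G S :=
  fun v _ => by have := G.degree_lt_card_verts v; omega

lemma card_mul_qmDeg_sq [Nonempty V] :
    (Fintype.card V : ℝ) * qmDeg G ^ 2 = ∑ v, (G.degree v : ℝ) ^ 2 := by
  rw [qmDeg, Real.sq_sqrt (by positivity), mul_div_cancel₀ _ (by positivity)]

variable {G} {ι : Type*} [DecidableEq ι] {f : V → ι}

lemma degree_sq_le_of_isDeltaSet (hf : ∀ i, IsDeltaSet G (univ.filter fun v => f v = i))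
    (v : V) :
    (G.degree v : ℝ) ^ 2 ≤ (Fintype.card V - #(univ.filter fun w => f w = f v) : ℝ) ^ 2 := by
  have hdeg := hf (f v) v (by simp)
  have hcard : #(univ.filter fun w => f w = f v) ≤ Fintype.card V := card_le_univ _
  have : (G.degree v : ℝ) ≤ Fintype.card V - #(univ.filter fun w => f w = f v) := by
    rw [← Nat.cast_sub hcard]; exact_mod_cast hdeg
  gcongr

variable (G) [DecidableEq V]

lemma exists_isDeltaSet_partition_genChrom :
    ∃ f : V → Fin (genChrom G), ∀ i, IsDeltaSet G (univ.filter fun v => f v = i) :=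
  Nat.sInf_mem (s := {r | ∃ f : V → Fin r, ∀ i, IsDeltaSet G (univ.filter fun v => f v = i)})
    ⟨Fintype.card V, Fintype.equivFin V, fun _ => isDeltaSet_of_card_le_one G <|
    card_le_one.2 fun _ ha _ hb => (Fintype.equivFin V).injective <| by simp_all⟩

lemma genChrom_pos [Nonempty V] : 0 < genChrom G := by
  obtain ⟨f, -⟩ := exists_isDeltaSet_partition_genChrom G
  exact Fin.pos (f (Classical.arbitrary V))

end DeltaSet

section Partition

variable {V ι : Type*} [Fintype V] [Fintype ι] [Nonempty ι] [DecidableEq ι] {G : SimpleGraph V}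
  [DecidableRel G.Adj] {f : V → ι}

lemma card_fiber_eq_and_degree_eq_of_le_sum_degree_sq
    (hf : ∀ i, IsDeltaSet G (univ.filter fun v => f v = i))
    (hsq : (Fintype.card V : ℝ) * (Fintype.card V - Fintype.card V / Fintype.card ι) ^ 2 ≤
      ∑ v, (G.degree v : ℝ) ^ 2) :
    (∀ i, (#(univ.filter fun v => f v = i) : ℝ) = Fintype.card V / Fintype.card ι) ∧
      ∀ v, (G.degree v : ℝ) = Fintype.card V - Fintype.card V / Fintype.card ι := by
  set n : ℝ := (Fintype.card V : ℝ)
  set N : ι → ℝ := fun i => #(univ.filter fun v => f v = i)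
  have hN0 : ∀ i, 0 ≤ N i := fun i => Nat.cast_nonneg _
  have hNsum : ∑ i, N i = n := by
    have := card_eq_sum_card_fiberwise (s := univ) (t := univ) fun v _ => mem_univ (f v)
    rw [card_univ] at this
    simp only [N, n]
    exact_mod_cast this.symm
  have hle : ∑ v, (G.degree v : ℝ) ^ 2 ≤ ∑ v, (n - N (f v)) ^ 2 :=
    sum_le_sum fun v _ => degree_sq_le_of_isDeltaSet hf v
  have hfib : ∑ v, (n - N (f v)) ^ 2 = ∑ i, N i * (n - N i) ^ 2 :=
    sum_comp_eq_sum_card_fiber_mul f fun i => (n - N i) ^ 2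
  have hupper := sum_mul_sub_sq_le hN0 hNsum
  have hN := eq_div_card_of_le_sum_mul_sub_sq hN0 hNsum (by linarith)
  refine ⟨hN, fun v => ?_⟩
  have hdeg_sq : (G.degree v : ℝ) ^ 2 = (n - N (f v)) ^ 2 :=
    (sum_eq_sum_iff_of_le fun v _ => degree_sq_le_of_isDeltaSet hf v).1 (by linarith) v (mem_univ v)
  have hNle : N (f v) ≤ n := by simp only [N, n]; exact_mod_cast card_le_univ _
  rw [← hN (f v), ← pow_left_inj₀ (Nat.cast_nonneg _) (sub_nonneg.2 hNle) two_ne_zero]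
  exact hdeg_sq

end Partition

lemma dvd_and_cast_sub_div_eq {n r k : ℕ} (hr : r ≠ 0) (hk : (k : ℝ) = n / r) :
    r ∣ n ∧ (n : ℝ) - n / r = (n * (r - 1) / r : ℕ) := by
  have hrk : r * k = n := by
    rw [← Nat.cast_inj (R := ℝ), Nat.cast_mul, hk, mul_div_cancel₀ _ (by exact_mod_cast hr)]
  refine ⟨⟨k, hrk.symm⟩, ?_⟩
  rw [← hrk, mul_assoc, Nat.mul_div_cancel_left _ (Nat.pos_of_ne_zero hr)]
  push_cast [Nat.cast_sub (Nat.one_le_iff_ne_zero.2 hr)]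
  field_simp

theorem stmt8 {V : Type*} [Fintype V] [DecidableEq V] (G : SimpleGraph V) [DecidableRel G.Adj]
    (hn : 0 < Fintype.card V)
    (heq : (genChrom G : ℝ) = (Fintype.card V : ℝ) / ((Fintype.card V : ℝ) - qmDeg G)) :
    genChrom G ∣ Fintype.card V ∧
      G.IsRegularOfDegree (Fintype.card V * (genChrom G - 1) / genChrom G) := by
  have : Nonempty V := Fintype.card_pos_iff.1 hn
  have hr := genChrom_pos G
  have : Nonempty (Fin (genChrom G)) := ⟨⟨0, hr⟩⟩
  obtain ⟨f, hf⟩ := exists_isDeltaSet_partition_genChrom G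
  have hqm : qmDeg G = Fintype.card V - Fintype.card V / Fintype.card (Fin (genChrom G)) := by
    rw [Fintype.card_fin, heq, div_div_cancel₀ (by positivity)]; ring
  have hsq := (card_mul_qmDeg_sq G).le
  rw [hqm] at hsq
  obtain ⟨hcard, hdeg⟩ := card_fiber_eq_and_degree_eq_of_le_sum_degree_sq hf hsq
  rw [Fintype.card_fin] at hcard hdeg
  obtain ⟨hdvd, hdeg_eq⟩ := dvd_and_cast_sub_div_eq hr.ne' (hcard ⟨0, hr⟩)
  exact ⟨hdvd, fun v => by exact_mod_cast (hdeg v).trans hdeg_eq⟩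
end

section
/- For every simple graph G on n vertices, the clique number satisfies ω(G) ≥ n/(n − \bar{\bar d}(G)), where \bar{\bar d}(G) is the quadratic mean of the degrees (Edwards' inequality). -/
/-!
Take a vertex `v` of maximum degree inside the current vertex set `T`, make `T \ N(v)` one
class (each of its vertices `u` has `deg_T u ≤ deg_T v = |T| - |T \ N(v)|`) and recurse on
`T ∩ N(v)`, whose cliques are smaller by one. This splits the vertices into `ω` classes `Pᵢ`
with `deg u ≤ n - |Pᵢ|` for `u ∈ Pᵢ`, so `∑ deg² ≤ ∑ᵢ |Pᵢ| (n - |Pᵢ|)²`. Bounding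
`x (n - x)²` on `[0, n]` by its tangent line at `n / ω` gives `∑ deg² ≤ n³ (1 - 1/ω)²`, that is
`qmDeg G ≤ n - n / ω`.
-/

open Finset

/-- The right side is `r³` times the tangent line of `x ↦ x (n - x)²` at `n / r`; the difference
of the two sides factors as `(r x - n)² (2 n (r - 1) - r x)`. -/
theorem mul_sub_sq_le_tangent {n r x : ℝ} (hr : 2 ≤ r) (hx₀ : 0 ≤ x) (hxn : x ≤ n) :
    r ^ 3 * (x * (n - x) ^ 2) ≤ n ^ 2 * r * (r - 1) * (r - 3) * x + 2 * n ^ 3 * (r - 1) := by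
  have hc : 0 ≤ 2 * n * (r - 1) - r * x := by nlinarith
  nlinarith [mul_nonneg (sq_nonneg (r * x - n)) hc]

theorem sum_mul_sub_sq_le_s10 {ι : Type*} (s : Finset ι) {x : ι → ℝ} {n : ℝ}
    (hx : ∀ i ∈ s, 0 ≤ x i) (hsum : ∑ i ∈ s, x i = n) :
    (#s : ℝ) ^ 2 * ∑ i ∈ s, x i * (n - x i) ^ 2 ≤ n ^ 3 * (#s - 1) ^ 2 := by
  rcases lt_or_ge #s 2 with hs | hs
  · obtain hs | hs : #s = 0 ∨ #s = 1 := by omega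
    · obtain rfl := card_eq_zero.mp hs
      simp [← hsum]
    · obtain ⟨j, rfl⟩ := card_eq_one.mp hs
      simp_all
  · have hr : (2 : ℝ) ≤ #s := by exact_mod_cast hs
    set r : ℝ := (#s : ℝ)
    have hxn : ∀ i ∈ s, x i ≤ n := fun i hi => hsum ▸ single_le_sum hx hi
    have hsum_tangent : r ^ 3 * ∑ i ∈ s, x i * (n - x i) ^ 2 ≤ n ^ 3 * r * (r - 1) ^ 2 :=
      calc r ^ 3 * ∑ i ∈ s, x i * (n - x i) ^ 2
          ≤ ∑ i ∈ s, (n ^ 2 * r * (r - 1) * (r - 3) * x i + 2 * n ^ 3 * (r - 1)) := by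
            rw [mul_sum]
            exact sum_le_sum fun i hi => mul_sub_sq_le_tangent hr (hx i hi) (hxn i hi)
        _ = n ^ 3 * r * (r - 1) ^ 2 := by
            rw [sum_add_distrib, ← mul_sum, hsum, sum_const, nsmul_eq_mul]
            ring
    nlinarith

theorem div_sub_sqrt_div_le {n r S : ℝ} (hn : 0 < n) (hr : 1 ≤ r)
    (h : r ^ 2 * S ≤ n ^ 3 * (r - 1) ^ 2) : n / (n - √(S / n)) ≤ r := by
  have hsqrt : √(S / n) ≤ n - n / r := by
    rw [Real.sqrt_le_left (by rw [sub_nonneg]; exact div_le_self hn.le hr), div_le_iff₀ hn]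
    have hr₀ : 0 < r := by linarith
    field_simp
    nlinarith
  calc n / (n - √(S / n)) ≤ n / (n / r) :=
        div_le_div_of_nonneg_left hn.le (by positivity) (by linarith)
    _ = r := by field_simp

theorem card_filter_le_card_filter_add_card_sdiff {α : Type*} [DecidableEq α] (s t : Finset α)
    (p : α → Prop) [DecidablePred p] : #{x ∈ s | p x} ≤ #{x ∈ t | p x} + #(s \ t) := by
  refine (card_le_card fun x hx => ?_).trans (card_union_le _ _)
  by_cases hxt : x ∈ t <;> simp_all

namespace SimpleGraph

variable {V : Type*} {G : SimpleGraph V} [DecidableRel G.Adj]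

section

variable [DecidableEq V]

theorem card_le_pred_of_isClique_subset_filter_adj {T C : Finset V} {r : ℕ} {v : V}
    (hr : ∀ C ⊆ T, G.IsClique (C : Set V) → #C ≤ r) (hv : v ∈ T)
    (hC : C ⊆ {w ∈ T | G.Adj v w}) (hCc : G.IsClique (C : Set V)) : #C ≤ r - 1 := by
  have hvC : v ∉ C := fun h => G.irrefl (mem_filter.mp (hC h)).2
  have hins : G.IsClique (insert v C : Set V) :=
    isClique_insert.mpr ⟨hCc, fun w hw _ => (mem_filter.mp (hC hw)).2⟩
  have := hr (insert v C) (insert_subset hv (hC.trans (filter_subset _ _))) (by simpa using hins)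
  rw [card_insert_of_notMem hvC] at this
  omega

theorem exists_coloring_card_filter_adj_add_card_le (T : Finset V) (r : ℕ)
    (hr : ∀ C ⊆ T, G.IsClique (C : Set V) → #C ≤ r) :
    ∃ f : V → ℕ, (∀ v ∈ T, f v < r) ∧
      ∀ u ∈ T, #{w ∈ T | G.Adj u w} + #{v ∈ T | f v = f u} ≤ #T := by
  induction T using strongInduction generalizing r with
  | H T ih =>
  rcases T.eq_empty_or_nonempty with rfl | hT
  · simp
  obtain ⟨v, hvT, hvmax⟩ := T.exists_max_image (fun u => #{w ∈ T | G.Adj u w}) hT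
  set T' := {w ∈ T | G.Adj v w}
  have hT' : T' ⊆ T := filter_subset _ _
  have hvT' : v ∉ T' := by simp [T']
  have hr₁ : 1 ≤ r := by simpa using hr {v} (by simpa using hvT) (by simp)
  obtain ⟨f', hf'r, hf'⟩ := ih T' (ssubset_of_subset_of_ne hT' fun h => hvT' (h ▸ hvT)) (r - 1)
    fun C hC hCc => card_le_pred_of_isClique_subset_filter_adj hr hvT hC hCc
  refine ⟨fun u => if u ∈ T' then f' u else r - 1,
    fun u _ => by dsimp only; split_ifs <;> grind, ?_⟩
  intro u hu
  have hcard := card_sdiff_of_subset hT'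
  have := card_le_card hT'
  by_cases huT' : u ∈ T'
  · have hclass :
        {w ∈ T | (if w ∈ T' then f' w else r - 1) = f' u} = {w ∈ T' | f' w = f' u} := by
      ext w
      have := hf'r w
      have := hf'r u huT'
      by_cases hw : w ∈ T' <;> grind
    simp only [huT', if_true, hclass]
    have := hf' u huT'
    have := card_filter_le_card_filter_add_card_sdiff T T' (G.Adj u)
    omega
  · have hclass : {w ∈ T | (if w ∈ T' then f' w else r - 1) = r - 1} = T \ T' := by
      ext w
      have := hf'r w
      by_cases hw : w ∈ T' <;> grind
    simp only [huT', if_false, hclass]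
    have := hvmax u hu
    omega

end

variable (G) in
theorem exists_isDeltaSet_partition [Fintype V] :
    ∃ f : V → Fin G.cliqueNum, ∀ i, IsDeltaSet G {v | f v = i} := by
  classical
  obtain ⟨f, hfr, hf⟩ := exists_coloring_card_filter_adj_add_card_le univ G.cliqueNum
    fun C _ hC => hC.card_le_cliqueNum
  refine ⟨fun v => ⟨f v, hfr v (mem_univ v)⟩, fun i v hv => ?_⟩
  obtain rfl : (⟨f v, _⟩ : Fin _) = i := (mem_filter.mp hv).2
  have := hf v (mem_univ v)
  simp only [← neighborFinset_eq_filter, card_neighborFinset_eq_degree, card_univ] at this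
  simp only [Fin.mk.injEq]
  omega

end SimpleGraph

theorem div_sub_qmDeg_le_of_isDeltaSet {V : Type*} [Fintype V] {G : SimpleGraph V}
    [DecidableRel G.Adj] {r : ℕ} (f : V → Fin r)
    (hf : ∀ i, IsDeltaSet G {v | f v = i}) :
    (Fintype.card V : ℝ) / (Fintype.card V - qmDeg G) ≤ r := by
  set n : ℝ := (Fintype.card V : ℝ)
  set P : Fin r → Finset V := fun i => {v | f v = i}
  rcases isEmpty_or_nonempty V with hV | hV
  · simp [n]
  have hdeg : ∀ v, (G.degree v : ℝ) ≤ n - #(P (f v)) := by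
    intro v
    have := hf (f v) v (by simp)
    rw [← Nat.cast_sub (card_le_univ _)]
    exact_mod_cast this
  have hsum_sq : ∑ v, (G.degree v : ℝ) ^ 2 ≤ ∑ i, (#(P i) : ℝ) * (n - #(P i)) ^ 2 :=
    calc ∑ v, (G.degree v : ℝ) ^ 2 ≤ ∑ v, (n - #(P (f v))) ^ 2 :=
          sum_le_sum fun v _ => pow_le_pow_left₀ (by positivity) (hdeg v) 2
      _ = ∑ i, (#(P i) : ℝ) * (n - #(P i)) ^ 2 := by
          rw [← sum_fiberwise' univ f fun i => (n - #(P i)) ^ 2]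
          simp only [sum_const, nsmul_eq_mul, P]
  have hsum_card : ∑ i, (#(P i) : ℝ) = n := by
    have := card_eq_sum_card_fiberwise (s := univ) (t := univ) (f := f) (by simp)
    rw [card_univ] at this
    simp only [n, this, Nat.cast_sum, P]
  have hbound := sum_mul_sub_sq_le_s10 univ (fun i _ => Nat.cast_nonneg (#(P i))) hsum_card
  rw [card_univ, Fintype.card_fin] at hbound
  have hr : (1 : ℝ) ≤ r := by exact_mod_cast Fin.pos (f (Classical.arbitrary V))
  exact div_sub_sqrt_div_le (Nat.cast_pos.mpr Fintype.card_pos) hr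
    ((mul_le_mul_of_nonneg_left hsum_sq (by positivity)).trans hbound)

theorem stmt10_general {V : Type*} [Fintype V] (G : SimpleGraph V) [DecidableRel G.Adj] :
    (G.cliqueNum : ℝ) ≥ (Fintype.card V : ℝ) / ((Fintype.card V : ℝ) - qmDeg G) := by
  obtain ⟨f, hf⟩ := G.exists_isDeltaSet_partition
  exact div_sub_qmDeg_le_of_isDeltaSet f hf

theorem stmt10 {V : Type*} [Fintype V] (G : SimpleGraph V) [DecidableRel G.Adj]
    (hn : 0 < Fintype.card V) :
    (G.cliqueNum : ℝ) ≥ (Fintype.card V : ℝ) / ((Fintype.card V : ℝ) - qmDeg G) :=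
  stmt10_general G
end
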